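/- Let $T$ be a polygonal curve, $\Delta \ge 0$, and let $(S, f, g)$ be a pathlet-preserving simplification of $T$. Then for any $(\ell, \Delta)$-pathlet $(P, \mathcal{I})$ of $T$, there exists a subcurve $S[s,t]$ of $S$ such that $(S[s,t], \mathcal{I})$ is an $(\ell + 2 - |\mathbb{N} \cap \{s,t\}|, 4\Delta)$-pathlet of $T$. -/

import Mathlib

/-! The matching `(f, g)` carries an interval `[a, b]` of `I` to a subcurve `S[s,t]` within
Fréchet distance `2Δ` of `T[a,b]`, and the defining property of the simplification, applied to
the pathlet curve `P`, bounds the complexity of `S[s,t]` by `|P| + 2 - |ℕ ∩ {s,t}|`. Every other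
interval of `I` is within `Δ` of `P`, hence within `2Δ` of `T[a,b]`, so the triangle inequality
for the Fréchet distance puts `S[s,t]` within `4Δ` of it.

The triangle inequality is the only delicate point: reparameterizations may stall, so two
matchings are composed through an approximate inverse of the middle reparameterization, at the
cost of an arbitrarily small error controlled by the uniform continuity of the middle curve. -/

open Set

noncomputable section

/-- A reparameterization of `[0,1]` onto `[a,b]`: a continuous non-decreasing
surjection. -/
def IsReparamOn (f : ℝ → ℝ) (a b : ℝ) : Prop :=
  ContinuousOn f (Icc 0 1) ∧ MonotoneOn f (Icc 0 1) ∧ f '' Icc 0 1 = Icc a b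

/-- The (continuous) Fréchet distance between two curves parameterized
over `[0,1]`. -/
def frechetDist {d : ℕ} (P Q : ℝ → EuclideanSpace ℝ (Fin d)) : ℝ :=
  sInf {δ : ℝ | 0 ≤ δ ∧ ∃ f g : ℝ → ℝ, IsReparamOn f 0 1 ∧ IsReparamOn g 0 1 ∧
    ∀ t ∈ Icc (0 : ℝ) 1, dist (P (f t)) (Q (g t)) ≤ δ}

/-- A polygonal curve with `n` vertices: a map on `[1,n]` that is linear on
each integer cell `[i, i+1]`. -/
structure PolyCurve (d : ℕ) where
  n : ℕ
  hn : 1 ≤ n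
  map : ℝ → EuclideanSpace ℝ (Fin d)
  piecewise_linear : ∀ i : ℕ, 1 ≤ i → i + 1 ≤ n → ∀ t ∈ Icc (0 : ℝ) 1,
    map (i + t) = (1 - t) • map i + t • map (i + 1)

/-- The subcurve of `T` on `[a,b]`, renormalized to the parameter domain
`[0,1]`. -/
def subcurve {d : ℕ} (T : ℝ → EuclideanSpace ℝ (Fin d)) (a b : ℝ) :
    ℝ → EuclideanSpace ℝ (Fin d) :=
  fun t => T (a + t * (b - a))

/-- A polygonal curve renormalized to the parameter domain `[0,1]`. -/
def norm01 {d : ℕ} (P : PolyCurve d) : ℝ → EuclideanSpace ℝ (Fin d) :=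
  subcurve P.map 1 (P.n : ℝ)

/-- The set of reals that are integers. -/
def IntPts : Set ℝ := {x | ∃ k : ℤ, (k : ℝ) = x}

/-- `|ℕ ∩ {s, t}|`: the number of elements of `{s,t}` that are integers. -/
def natCount (s t : ℝ) : ℕ := (({s, t} : Set ℝ) ∩ IntPts).ncard

/-- The number of vertices of the subcurve `S[s,t]` of a polygonal curve:
the integer parameters in `[s,t]` plus the non-integer endpoints. -/
def vcount (s t : ℝ) : ℕ :=
  (Icc s t ∩ IntPts).ncard + ((({s, t} : Set ℝ) \ IntPts)).ncard

/-- `(P, I)` (a curve `P` on `[0,1]` of complexity `cP`, with a set `I` of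
parameter intervals of `T`) is an `(ℓ, Δ)`-pathlet of `T`. -/
def IsPathlet {d : ℕ} (T : PolyCurve d) (ℓ : ℕ) (Δ : ℝ)
    (P : ℝ → EuclideanSpace ℝ (Fin d)) (cP : ℕ) (I : Set (ℝ × ℝ)) : Prop :=
  cP ≤ ℓ ∧ ∀ ab ∈ I, 1 ≤ ab.1 ∧ ab.1 ≤ ab.2 ∧ ab.2 ≤ (T.n : ℝ) ∧
    frechetDist P (subcurve T.map ab.1 ab.2) ≤ Δ

/-- `(S, f, g)` is a pathlet-preserving simplification of `T`:
`(f,g)` is a `2Δ`-matching between `S` and `T`, and for every subcurve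
`T[a,b]` and every curve `P'` with `d_F(P', T[a,b]) ≤ Δ`, the subcurve
`S[s,t]` matched to `T[a,b]` satisfies `|S[s,t]| ≤ |P'| + 2 - |ℕ ∩ {s,t}|`. -/
def IsPathletPreservingSimpl {d : ℕ} (T : PolyCurve d) (Δ : ℝ)
    (S : PolyCurve d) (f g : ℝ → ℝ) : Prop :=
  IsReparamOn f 1 (S.n : ℝ) ∧ IsReparamOn g 1 (T.n : ℝ) ∧
  (∀ t ∈ Icc (0 : ℝ) 1, dist (S.map (f t)) (T.map (g t)) ≤ 2 * Δ) ∧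
  (∀ a b : ℝ, 1 ≤ a → a ≤ b → b ≤ (T.n : ℝ) →
    ∀ u v : ℝ, u ∈ Icc (0 : ℝ) 1 → v ∈ Icc (0 : ℝ) 1 → u ≤ v →
      g u = a → g v = b →
      ∀ P' : PolyCurve d, frechetDist (norm01 P') (subcurve T.map a b) ≤ Δ →
        vcount (f u) (f v) ≤ P'.n + 2 - natCount (f u) (f v))

lemma add_mul_sub_mem_Icc {a b τ : ℝ} (hab : a ≤ b) (hτ : τ ∈ Icc (0 : ℝ) 1) :
    a + τ * (b - a) ∈ Icc a b :=
  ⟨by nlinarith [hτ.1], by nlinarith [hτ.2]⟩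

namespace IsReparamOn

variable {f g m : ℝ → ℝ} {a b : ℝ}

lemma of_monotoneOn (hc : ContinuousOn f (Icc 0 1)) (hm : MonotoneOn f (Icc 0 1))
    (h0 : f 0 = a) (h1 : f 1 = b) : IsReparamOn f a b :=
  ⟨hc, hm, h0 ▸ h1 ▸ hc.image_Icc_of_monotoneOn zero_le_one hm⟩

lemma map_zero_map_one (hf : IsReparamOn f a b) : f 0 = a ∧ f 1 = b := by
  have h := hf.2.2
  rwa [hf.1.image_Icc_of_monotoneOn zero_le_one hf.2.1,
    Icc_eq_Icc_iff (hf.2.1 (left_mem_Icc.2 zero_le_one) (right_mem_Icc.2 zero_le_one)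
      zero_le_one)] at h

lemma id : IsReparamOn (fun t => t) 0 1 :=
  of_monotoneOn continuousOn_id monotoneOn_id rfl rfl

lemma mem (hf : IsReparamOn f a b) {x : ℝ} (hx : x ∈ Icc (0 : ℝ) 1) : f x ∈ Icc a b :=
  hf.2.2 ▸ mem_image_of_mem f hx

lemma comp (hf : IsReparamOn f a b) (hm : IsReparamOn m 0 1) : IsReparamOn (f ∘ m) a b :=
  ⟨hf.1.comp hm.1 fun _ => hm.mem, hf.2.1.comp hm.2.1 fun _ => hm.mem,
    by rw [image_comp, hm.2.2, hf.2.2]⟩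

lemma exists_ordered_preimages (hg : IsReparamOn g a b) {x y : ℝ} (hx : a ≤ x) (hxy : x ≤ y)
    (hy : y ≤ b) :
    ∃ u v, u ∈ Icc (0 : ℝ) 1 ∧ v ∈ Icc (0 : ℝ) 1 ∧ u ≤ v ∧ g u = x ∧ g v = y := by
  obtain ⟨hg0, hg1⟩ := hg.map_zero_map_one
  obtain ⟨u, hu, rfl⟩ : x ∈ g '' Icc 0 1 :=
    intermediate_value_Icc zero_le_one hg.1 (hg0 ▸ hg1 ▸ ⟨hx, hxy.trans hy⟩)
  obtain ⟨v, hv, rfl⟩ : y ∈ g '' Icc u 1 :=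
    intermediate_value_Icc hu.2 (hg.1.mono (Icc_subset_Icc hu.1 le_rfl)) (hg1 ▸ ⟨hxy, hy⟩)
  exact ⟨u, v, hu, ⟨hu.1.trans hv.1, hv.2⟩, hv.1, rfl, rfl⟩

/-- A reparameterization may stall and then has no continuous inverse, but `g + c • id` is
strictly monotone, and its inverse, rescaled, inverts `g` up to `c`. -/
lemma exists_approx_rightInverse (hg : IsReparamOn g 0 1) {c : ℝ} (hc : 0 < c) :
    ∃ m, IsReparamOn m 0 1 ∧ ∀ y ∈ Icc (0 : ℝ) 1, |g (m y) - y| ≤ c := by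
  obtain ⟨hg0, hg1⟩ := hg.map_zero_map_one
  set k : ℝ → ℝ := fun x => g (projIcc (0 : ℝ) 1 zero_le_one x) + c * x
  have hg_mem : ∀ x, g (projIcc (0 : ℝ) 1 zero_le_one x) ∈ Icc (0 : ℝ) 1 :=
    fun x => hg.mem (projIcc (0 : ℝ) 1 zero_le_one x).2
  have hk_of_mem : ∀ x ∈ Icc (0 : ℝ) 1, k x = g x + c * x := fun x hx => by
    simp only [k, projIcc_of_mem _ hx]
  have hk_mono : StrictMono k := fun x y hxy =>
    add_lt_add_of_le_of_lt (hg.2.1 (projIcc (0 : ℝ) 1 _ x).2 (projIcc (0 : ℝ) 1 _ y).2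
      (monotone_projIcc _ hxy.le)) (mul_lt_mul_of_pos_left hxy hc)
  have hk_cont : Continuous k :=
    (hg.1.comp_continuous (continuous_subtype_val.comp continuous_projIcc)
      fun x => (projIcc (0 : ℝ) 1 _ x).2).add (continuous_const.mul continuous_id)
  have hk_surj : Function.Surjective k := hk_cont.surjective
    (Filter.tendsto_atTop_mono (fun x => by simp only [k, id_eq]; linarith [(hg_mem x).1])
      (Filter.tendsto_id.const_mul_atTop hc))
    (Filter.tendsto_atBot_mono (fun x => by simp only [k, id_eq]; linarith [(hg_mem x).2])
      (Filter.tendsto_atBot_add_const_right _ 1 (Filter.tendsto_id.const_mul_atBot hc)))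
  set e := hk_mono.orderIsoOfSurjective k hk_surj
  have he : ∀ x y, e.symm y = x ↔ y = k x := fun x y => e.symm_apply_eq
  have hm : IsReparamOn (fun y => e.symm ((1 + c) * y)) 0 1 := by
    refine of_monotoneOn (e.symm.continuous.comp (continuous_const.mul continuous_id)).continuousOn
      (fun x _ y _ hxy => e.symm.monotone (by nlinarith)) ?_ ?_
    · rw [he, hk_of_mem 0 (left_mem_Icc.2 zero_le_one), hg0]; ring
    · rw [he, hk_of_mem 1 (right_mem_Icc.2 zero_le_one), hg1]; ring
  refine ⟨_, hm, fun y hy => ?_⟩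
  have hx := hm.mem hy
  have hkx : k (e.symm ((1 + c) * y)) = (1 + c) * y := e.apply_symm_apply _
  rw [hk_of_mem _ hx] at hkx
  rw [show g _ - y = c * (y - e.symm ((1 + c) * y)) by linarith, abs_mul, abs_of_pos hc]
  exact mul_le_of_le_one_right hc.le
    (abs_le.2 ⟨by linarith [hx.2, hy.1], by linarith [hx.1, hy.2]⟩)

end IsReparamOn

lemma MonotoneOn.exists_isReparamOn_rescale {f : ℝ → ℝ} {u v : ℝ}
    (hc : ContinuousOn f (Icc u v)) (hm : MonotoneOn f (Icc u v)) (huv : u ≤ v) :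
    ∃ φ, IsReparamOn φ 0 1 ∧
      ∀ τ ∈ Icc (0 : ℝ) 1, f u + φ τ * (f v - f u) = f (u + τ * (v - u)) := by
  have hw : MapsTo (fun τ : ℝ => u + τ * (v - u)) (Icc 0 1) (Icc u v) :=
    fun τ hτ => add_mul_sub_mem_Icc huv hτ
  rcases (hm (left_mem_Icc.2 huv) (right_mem_Icc.2 huv) huv).eq_or_lt with hfuv | hfuv
  · refine ⟨fun τ => τ, IsReparamOn.id, fun τ hτ => ?_⟩
    have h := hm.mapsTo_Icc (hw hτ)
    rw [← hfuv, Icc_self, mem_singleton_iff] at h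
    rw [h, ← hfuv]; ring
  · have hne : f v - f u ≠ 0 := (sub_pos.2 hfuv).ne'
    refine ⟨fun τ => (f (u + τ * (v - u)) - f u) / (f v - f u), ?_, fun τ _ => ?_⟩
    · refine IsReparamOn.of_monotoneOn
        (((hc.comp (by fun_prop) hw).sub continuousOn_const).div_const _)
        (fun x hx y hy hxy => div_le_div_of_nonneg_right
          (sub_le_sub_right (hm (hw hx) (hw hy) (by nlinarith [huv])) _) (sub_pos.2 hfuv).le) ?_ ?_
      · simp
      · simp [div_self hne]
    · field_simp; ring

section Frechet

variable {d : ℕ} {P Q R : ℝ → EuclideanSpace ℝ (Fin d)} {δ δ' δ₁ δ₂ ε : ℝ}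

def HasMatching (P Q : ℝ → EuclideanSpace ℝ (Fin d)) (δ : ℝ) : Prop :=
  ∃ f g : ℝ → ℝ, IsReparamOn f 0 1 ∧ IsReparamOn g 0 1 ∧
    ∀ t ∈ Icc (0 : ℝ) 1, dist (P (f t)) (Q (g t)) ≤ δ

namespace HasMatching

lemma mono (h : HasMatching P Q δ) (hδ : δ ≤ δ') : HasMatching P Q δ' :=
  let ⟨f, g, hf, hg, hfg⟩ := h
  ⟨f, g, hf, hg, fun t ht => (hfg t ht).trans hδ⟩

lemma symm (h : HasMatching P Q δ) : HasMatching Q P δ :=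
  let ⟨f, g, hf, hg, hfg⟩ := h
  ⟨g, f, hg, hf, fun t ht => dist_comm (Q (g t)) (P (f t)) ▸ hfg t ht⟩

lemma nonneg (h : HasMatching P Q δ) : 0 ≤ δ :=
  let ⟨_, _, _, _, hfg⟩ := h
  dist_nonneg.trans (hfg 0 (left_mem_Icc.2 zero_le_one))

lemma frechetDist_le (h : HasMatching P Q δ) : frechetDist P Q ≤ δ :=
  csInf_le ⟨0, fun _ hδ => hδ.1⟩ ⟨h.nonneg, h⟩

lemma trans (hQ : ContinuousOn Q (Icc 0 1)) (h₁ : HasMatching P Q δ₁) (h₂ : HasMatching Q R δ₂)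
    (hε : 0 < ε) : HasMatching P R (δ₁ + δ₂ + ε) := by
  obtain ⟨f₁, g₁, hf₁, hg₁, hfg₁⟩ := h₁
  obtain ⟨f₂, g₂, hf₂, hg₂, hfg₂⟩ := h₂
  obtain ⟨η, hη, hQη⟩ := Metric.uniformContinuousOn_iff.1
    (isCompact_Icc.uniformContinuousOn_of_continuous hQ) ε hε
  obtain ⟨m, hm, hg₁m⟩ := hg₁.exists_approx_rightInverse (half_pos hη)
  refine ⟨f₁ ∘ m ∘ f₂, g₂, (hf₁.comp hm).comp hf₂, hg₂, fun y hy => ?_⟩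
  have hy' := hf₂.mem hy
  have hx := hm.mem hy'
  have hQ_close : dist (Q (g₁ (m (f₂ y)))) (Q (f₂ y)) < ε :=
    hQη _ (hg₁.mem hx) _ hy' ((hg₁m _ hy').trans_lt (half_lt_self hη))
  calc dist (P (f₁ (m (f₂ y)))) (R (g₂ y))
      ≤ dist (P (f₁ (m (f₂ y)))) (Q (g₁ (m (f₂ y)))) + dist (Q (g₁ (m (f₂ y)))) (Q (f₂ y))
        + dist (Q (f₂ y)) (R (g₂ y)) := dist_triangle4 _ _ _ _
    _ ≤ δ₁ + ε + δ₂ := add_le_add (add_le_add (hfg₁ _ hx) hQ_close.le) (hfg₂ y hy)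
    _ = δ₁ + δ₂ + ε := by ring

end HasMatching

lemma exists_hasMatching (hP : ContinuousOn P (Icc 0 1)) (hQ : ContinuousOn Q (Icc 0 1)) :
    ∃ δ, HasMatching P Q δ := by
  obtain ⟨x, -, hx⟩ := isCompact_Icc.exists_isMaxOn (nonempty_Icc.2 zero_le_one)
    (continuous_dist.comp_continuousOn (hP.prodMk hQ))
  exact ⟨_, fun t => t, fun t => t, IsReparamOn.id, IsReparamOn.id, fun t ht => hx ht⟩

lemma hasMatching_of_frechetDist_lt (hP : ContinuousOn P (Icc 0 1))
    (hQ : ContinuousOn Q (Icc 0 1)) (h : frechetDist P Q < δ) : HasMatching P Q δ := by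
  -- without a matching of some width, `frechetDist P Q` would be the junk value `sInf ∅ = 0`
  obtain ⟨δ₀, hδ₀⟩ := exists_hasMatching hP hQ
  obtain ⟨δ₁, ⟨-, hδ₁ : HasMatching P Q δ₁⟩, hlt⟩ :=
    (csInf_lt_iff (s := {δ | 0 ≤ δ ∧ HasMatching P Q δ}) ⟨0, fun _ hδ => hδ.1⟩
      ⟨δ₀, hδ₀.nonneg, hδ₀⟩).1 h
  exact hδ₁.mono hlt.le

lemma frechetDist_comm (P Q : ℝ → EuclideanSpace ℝ (Fin d)) :
    frechetDist P Q = frechetDist Q P := by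
  have h : ∀ δ, HasMatching P Q δ ↔ HasMatching Q P δ := fun δ => ⟨.symm, .symm⟩
  simp only [frechetDist]
  congr 1
  ext δ
  exact and_congr_right fun _ => h δ

lemma frechetDist_triangle (hP : ContinuousOn P (Icc 0 1)) (hQ : ContinuousOn Q (Icc 0 1))
    (hR : ContinuousOn R (Icc 0 1)) :
    frechetDist P R ≤ frechetDist P Q + frechetDist Q R := by
  refine le_of_forall_pos_lt_add fun ε hε => ?_
  have hε' : 0 < ε / 4 := by positivity
  have h₁ := hasMatching_of_frechetDist_lt hP hQ (lt_add_of_pos_right _ hε')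
  have h₂ := hasMatching_of_frechetDist_lt hQ hR (lt_add_of_pos_right _ hε')
  calc frechetDist P R ≤ _ := (h₁.trans hQ h₂ hε').frechetDist_le
    _ < _ := by linarith

end Frechet

namespace PolyCurve

variable {d : ℕ} (C : PolyCurve d)

lemma continuousOn_cell {i : ℕ} (hi : 1 ≤ i) (hin : i + 1 ≤ C.n) :
    ContinuousOn C.map (Icc i (i + 1)) := by
  have hlin : Continuous fun x : ℝ => (1 - (x - i)) • C.map i + (x - i) • C.map (i + 1) := by
    fun_prop
  refine hlin.continuousOn.congr fun x hx => ?_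
  have h := C.piecewise_linear i hi hin (x - i) ⟨by linarith [hx.1], by linarith [hx.2]⟩
  rwa [add_sub_cancel] at h

lemma continuousOn : ContinuousOn C.map (Icc 1 C.n) := by
  suffices h : ∀ k : ℕ, 1 ≤ k → k ≤ C.n → ContinuousOn C.map (Icc 1 k) from h C.n C.hn le_rfl
  intro k hk
  induction k, hk using Nat.le_induction with
  | base => intro; simp
  | succ k hk ih =>
    intro hkn
    rw [Nat.cast_succ, ← Icc_union_Icc_eq_Icc (Nat.one_le_cast.2 hk) (by linarith)]
    exact (ih (by omega)).union_of_isClosed (C.continuousOn_cell hk hkn) isClosed_Icc isClosed_Icc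

lemma continuousOn_subcurve {a b : ℝ} (ha : 1 ≤ a) (hab : a ≤ b) (hb : b ≤ C.n) :
    ContinuousOn (subcurve C.map a b) (Icc 0 1) :=
  C.continuousOn.comp (by fun_prop) fun _ hτ =>
    Icc_subset_Icc ha hb (add_mul_sub_mem_Icc hab hτ)

lemma continuousOn_norm01 : ContinuousOn (norm01 C) (Icc 0 1) :=
  C.continuousOn_subcurve le_rfl (by exact_mod_cast C.hn) le_rfl

end PolyCurve

lemma hasMatching_subcurve {d : ℕ} {X Y : ℝ → EuclideanSpace ℝ (Fin d)} {f g : ℝ → ℝ}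
    {a b a' b' δ u v : ℝ} (hf : IsReparamOn f a b) (hg : IsReparamOn g a' b')
    (hfg : ∀ t ∈ Icc (0 : ℝ) 1, dist (X (f t)) (Y (g t)) ≤ δ)
    (hu : 0 ≤ u) (huv : u ≤ v) (hv : v ≤ 1) :
    HasMatching (subcurve X (f u) (f v)) (subcurve Y (g u) (g v)) δ := by
  have hsub : Icc u v ⊆ Icc 0 1 := Icc_subset_Icc hu hv
  obtain ⟨φ, hφ, hφf⟩ := (hf.2.1.mono hsub).exists_isReparamOn_rescale (hf.1.mono hsub) huv
  obtain ⟨ψ, hψ, hψg⟩ := (hg.2.1.mono hsub).exists_isReparamOn_rescale (hg.1.mono hsub) huv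
  refine ⟨φ, ψ, hφ, hψ, fun τ hτ => ?_⟩
  simp only [subcurve]
  rw [hφf τ hτ, hψg τ hτ]
  exact hfg _ (hsub (add_mul_sub_mem_Icc huv hτ))

lemma IsPathletPreservingSimpl.exists_matched_subcurve {d : ℕ} {T S : PolyCurve d} {Δ : ℝ}
    {f g : ℝ → ℝ} (hS : IsPathletPreservingSimpl T Δ S f g) {a b : ℝ}
    (ha : 1 ≤ a) (hab : a ≤ b) (hb : b ≤ T.n) {P : PolyCurve d}
    (hP : frechetDist (norm01 P) (subcurve T.map a b) ≤ Δ) :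
    ∃ s t : ℝ, 1 ≤ s ∧ s ≤ t ∧ t ≤ S.n ∧ vcount s t ≤ P.n + 2 - natCount s t ∧
      frechetDist (subcurve S.map s t) (subcurve T.map a b) ≤ 2 * Δ := by
  obtain ⟨hf, hg, hfg, hcount⟩ := hS
  obtain ⟨u, v, hu, hv, huv, rfl, rfl⟩ := hg.exists_ordered_preimages ha hab hb
  exact ⟨f u, f v, (hf.mem hu).1, hf.2.1 hu hv huv, (hf.mem hv).2,
    hcount _ _ ha hab hb u v hu hv huv rfl rfl P hP,
    (hasMatching_subcurve hf hg hfg hu.1 huv hv.2).frechetDist_le⟩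

lemma vcount_self_of_mem {x : ℝ} (hx : x ∈ IntPts) : vcount x x = 1 := by
  simp [vcount, hx, sdiff_eq_empty]

lemma natCount_self_of_mem {x : ℝ} (hx : x ∈ IntPts) : natCount x x = 1 := by
  simp [natCount, hx]

theorem stmt_7_general {d : ℕ} (T : PolyCurve d) (Δ : ℝ)
    (S : PolyCurve d) (f g : ℝ → ℝ)
    (hS : IsPathletPreservingSimpl T Δ S f g)
    (ℓ : ℕ) (P : PolyCurve d) (I : Set (ℝ × ℝ))
    (hP : IsPathlet T ℓ Δ (norm01 P) P.n I) :
    ∃ s t : ℝ, 1 ≤ s ∧ s ≤ t ∧ t ≤ (S.n : ℝ) ∧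
      IsPathlet T (ℓ + 2 - natCount s t) (4 * Δ) (subcurve S.map s t)
        (vcount s t) I := by
  obtain ⟨hPℓ, hI⟩ := hP
  rcases I.eq_empty_or_nonempty with rfl | ⟨ab, hab⟩
  · have h1 : (1 : ℝ) ∈ IntPts := ⟨1, Int.cast_one⟩
    refine ⟨1, 1, le_rfl, le_rfl, by exact_mod_cast S.hn, ?_, fun _ h => h.elim⟩
    rw [vcount_self_of_mem h1, natCount_self_of_mem h1]
    omega
  obtain ⟨ha, hab, hb, hPT⟩ := hI ab hab
  obtain ⟨s, t, hs, hst, ht, hcount, hST⟩ := hS.exists_matched_subcurve ha hab hb hPT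
  refine ⟨s, t, hs, hst, ht, hcount.trans (by omega), fun ab' hab' => ?_⟩
  obtain ⟨ha', hab', hb', hPT'⟩ := hI ab' hab'
  refine ⟨ha', hab', hb', ?_⟩
  have hScont := S.continuousOn_subcurve hs hst ht
  have hTcont := T.continuousOn_subcurve ha hab hb
  have hTcont' := T.continuousOn_subcurve ha' hab' hb'
  calc frechetDist (subcurve S.map s t) (subcurve T.map ab'.1 ab'.2)
      ≤ frechetDist (subcurve S.map s t) (subcurve T.map ab.1 ab.2)
        + (frechetDist (subcurve T.map ab.1 ab.2) (norm01 P)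
          + frechetDist (norm01 P) (subcurve T.map ab'.1 ab'.2)) :=
        (frechetDist_triangle hScont hTcont hTcont').trans <| add_le_add_right
          (frechetDist_triangle hTcont P.continuousOn_norm01 hTcont') _
    _ ≤ 2 * Δ + (Δ + Δ) := by
        rw [frechetDist_comm (subcurve T.map _ _)]
        gcongr
    _ = 4 * Δ := by ring

/-- For a pathlet-preserving simplification `S` of `T` and any
`(ℓ, Δ)`-pathlet `(P, I)` of `T`, there is a subcurve `S[s,t]` such that
`(S[s,t], I)` is an `(ℓ + 2 - |ℕ ∩ {s,t}|, 4Δ)`-pathlet of `T`. -/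
theorem stmt_7 {d : ℕ} (T : PolyCurve d) (Δ : ℝ) (hΔ : 0 ≤ Δ)
    (S : PolyCurve d) (f g : ℝ → ℝ)
    (hS : IsPathletPreservingSimpl T Δ S f g)
    (ℓ : ℕ) (P : PolyCurve d) (I : Set (ℝ × ℝ))
    (hP : IsPathlet T ℓ Δ (norm01 P) P.n I) :
    ∃ s t : ℝ, 1 ≤ s ∧ s ≤ t ∧ t ≤ (S.n : ℝ) ∧
      IsPathlet T (ℓ + 2 - natCount s t) (4 * Δ) (subcurve S.map s t)
        (vcount s t) I :=
  stmt_7_general T Δ S f g hS ℓ P I hP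

end
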